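/- arXiv:1509.06260 — 3 statements merged into one kernel-verified Lean document; each statement's English description precedes it below -/
import Mathlib

section
/- If the probability vectors X^k satisfy the master equations Ẋ^k = A^k X^{k-1} + B^k X^k + C^k X^{k+1} (k = 0,…,N, with A^0, A^{N+1}, C^{-1}, C^N zero), then the expected number of infected nodes [I](t) = Σ_k k S_k X^k(t) satisfies the exact differential equation d[I]/dt = τ[SI] − γ[I]. -/
/-! Infection raises the infected count by exactly one, recovery lowers it by exactly one and
the diagonal part keeps it. Hence for the generator `P = A + B + C` the row vector `k` of infected
counts satisfies `(k P) s' = k s' * ∑ s, P s s' + ∑ s, A s s' - ∑ s, C s s'`, which the column-sum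
identities turn into `τ n - γ k`; and `d/dt (k ⬝ᵥ X) = k ⬝ᵥ P X = (k P) ⬝ᵥ X`. -/

/-- Number of infected nodes in a state. -/
def infCount {N : ℕ} (s : Fin N → Bool) : ℕ :=
  (Finset.univ.filter (fun i => s i)).card

open Matrix

section LevelFunction

variable {ι R : Type*} [CommRing R] (k : ι → ℕ) (A B C : Matrix ι ι R)

theorem level_mul_generator_apply
    (hA : ∀ s s', A s s' ≠ 0 → k s = k s' + 1) (hC : ∀ s s', C s s' ≠ 0 → k s + 1 = k s')
    (hB : ∀ s s', s ≠ s' → B s s' = 0) (s s' : ι) :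
    (k s : R) * (A s s' + B s s' + C s s') =
      k s' * (A s s' + B s s' + C s s') + A s s' - C s s' := by
  by_cases hA0 : A s s' = 0
  · by_cases hC0 : C s s' = 0
    · rw [hA0, hC0]
      by_cases hs : s = s'
      · rw [hs]
        ring
      · rw [hB s s' hs]
        ring
    · have hlevel := hC s s' hC0
      rw [hA0, hB s s' (by rintro rfl; omega), ← hlevel]
      push_cast
      ring
  · have hlevel := hA s s' hA0
    have hC0 : C s s' = 0 := by_contra fun h => by have := hC s s' h; omega
    rw [hC0, hB s s' (by rintro rfl; omega), hlevel]
    push_cast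
    ring

theorem vecMul_generator_apply [Fintype ι]
    (hA : ∀ s s', A s s' ≠ 0 → k s = k s' + 1) (hC : ∀ s s', C s s' ≠ 0 → k s + 1 = k s')
    (hB : ∀ s s', s ≠ s' → B s s' = 0) (s' : ι) :
    ((fun s => (k s : R)) ᵥ* (A + B + C)) s' =
      k s' * ∑ s, (A s s' + B s s' + C s s') + ∑ s, A s s' - ∑ s, C s s' := by
  simp only [vecMul, dotProduct, Matrix.add_apply, level_mul_generator_apply k A B C hA hC hB _ s']
  rw [Finset.sum_sub_distrib, Finset.sum_add_distrib, Finset.mul_sum]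

end LevelFunction

theorem HasDerivAt.dotProduct_of_forall_hasDerivAt_mulVec {ι 𝕜 : Type*} [Fintype ι]
    [NontriviallyNormedField 𝕜] (P : Matrix ι ι 𝕜) (w : ι → 𝕜) (X : 𝕜 → ι → 𝕜) (t : 𝕜)
    (hX : ∀ s, HasDerivAt (fun u => X u s) ((P *ᵥ X t) s) t) :
    HasDerivAt (fun u => w ⬝ᵥ X u) ((w ᵥ* P) ⬝ᵥ X t) t := by
  rw [← dotProduct_mulVec]
  exact HasDerivAt.fun_sum fun s _ => (hX s).const_mul (w s)

/-- Exact mean-field equation: if X solves the master equations with generator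
P = A + B + C (A the infection part, increasing the infected count by one;
C the recovery part, decreasing it by one; B diagonal), with column sum
identities Σ_s C s s' = γ·infCount s', Σ_s A s s' = τ·N_{SI}^f(s'), and all
column sums of P zero, then [I](t) = Σ_s infCount(s)·X_t(s) satisfies
d[I]/dt = τ[SI] − γ[I]. -/
theorem stmt12 {N : ℕ} (τ γ : ℝ) (n : (Fin N → Bool) → ℝ)
    (A B C : Matrix (Fin N → Bool) (Fin N → Bool) ℝ)
    (hA : ∀ s s', A s s' ≠ 0 → infCount s = infCount s' + 1)
    (hC : ∀ s s', C s s' ≠ 0 → infCount s + 1 = infCount s')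
    (hBdiag : ∀ s s', s ≠ s' → B s s' = 0)
    (hCsum : ∀ s', ∑ s, C s s' = γ * infCount s')
    (hAsum : ∀ s', ∑ s, A s s' = τ * n s')
    (hcol : ∀ s', ∑ s, (A s s' + B s s' + C s s') = 0)
    (X : ℝ → (Fin N → Bool) → ℝ)
    (hX : ∀ s t, HasDerivAt (fun u => X u s)
      (∑ s', (A s s' + B s s' + C s s') * X t s') t)
    (t : ℝ) :
    HasDerivAt (fun u => ∑ s, (infCount s : ℝ) * X u s)
      (τ * (∑ s, n s * X t s) - γ * ∑ s, (infCount s : ℝ) * X t s) t := by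
  set k : (Fin N → Bool) → ℝ := fun s => infCount s
  have hkP : k ᵥ* (A + B + C) = τ • n - γ • k := by
    ext s'
    rw [vecMul_generator_apply infCount A B C hA hC hBdiag, hcol, hAsum, hCsum]
    simp [k]
  have hderiv := HasDerivAt.dotProduct_of_forall_hasDerivAt_mulVec (A + B + C) k X t
    fun s => hX s t
  rw [hkP, sub_dotProduct, smul_dotProduct, smul_dotProduct] at hderiv
  exact hderiv
end

section
/- Under the same hypotheses, the expected number of susceptible nodes [S](t) = Σ_k (N−k) S_k X^k(t) satisfies d[S]/dt = γ[I] − τ[SI]; consequently d([S]+[I])/dt = 0 provided Σ_k S_k Ẋ^k = 0. -/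
open Finset Matrix

theorem Finset.sum_mul_eq_mul_sum_of_ne_zero {ι R : Type*} [CommSemiring R] (S : Finset ι)
    {g a : ι → R} {c : R} (h : ∀ i ∈ S, a i ≠ 0 → g i = c) :
    ∑ i ∈ S, g i * a i = c * ∑ i ∈ S, a i := by
  rw [mul_sum]
  refine sum_congr rfl fun i hi => ?_
  by_cases ha : a i = 0
  · simp [ha]
  · rw [h i hi ha]

theorem hasDerivAt_sum_mul_of_hasDerivAt_mulVec {ι : Type*} [Fintype ι] (M : Matrix ι ι ℝ)
    {X : ℝ → ι → ℝ} {t : ℝ} (hX : ∀ s, HasDerivAt (fun u => X u s) ((M *ᵥ X t) s) t)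
    {f w : ι → ℝ} (hw : f ᵥ* M = w) :
    HasDerivAt (fun u => ∑ s, f s * X u s) (∑ s', w s' * X t s') t := by
  have h := HasDerivAt.fun_sum fun s (_ : s ∈ univ) => (hX s).const_mul (f s)
  rw [← hw]
  exact h.congr_deriv (dotProduct_mulVec f M (X t))

section LevelGenerator

variable {ι : Type*} [Fintype ι] (τ γ : ℝ) (k : ι → ℕ) (n : ι → ℝ)
  {A B C : Matrix ι ι ℝ}

theorem sum_level_mul_generator
    (hA : ∀ s s', A s s' ≠ 0 → k s = k s' + 1)
    (hC : ∀ s s', C s s' ≠ 0 → k s + 1 = k s')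
    (hBdiag : ∀ s s', s ≠ s' → B s s' = 0)
    (hCsum : ∀ s', ∑ s, C s s' = γ * k s')
    (hAsum : ∀ s', ∑ s, A s s' = τ * n s')
    (hcol : ∀ s', ∑ s, (A s s' + B s s' + C s s') = 0) (s' : ι) :
    ∑ s, (k s : ℝ) * (A s s' + B s s' + C s s') = τ * n s' - γ * k s' := by
  have hAk : ∑ s, (k s : ℝ) * A s s' = (k s' + 1) * ∑ s, A s s' :=
    sum_mul_eq_mul_sum_of_ne_zero _ fun s _ h => by rw [hA s s' h]; push_cast; rfl
  have hBk : ∑ s, (k s : ℝ) * B s s' = k s' * ∑ s, B s s' :=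
    sum_mul_eq_mul_sum_of_ne_zero _ fun s _ h => by
      rw [not_imp_comm.mp (hBdiag s s') h]
  have hCk : ∑ s, (k s : ℝ) * C s s' = (k s' - 1) * ∑ s, C s s' :=
    sum_mul_eq_mul_sum_of_ne_zero _ fun s _ h => by
      rw [← hC s s' h]; push_cast; ring
  have hBsum : ∑ s, B s s' = -(τ * n s' + γ * k s') := by
    have h := hcol s'
    rw [sum_add_distrib, sum_add_distrib, hAsum, hCsum] at h
    linarith
  simp only [mul_add, sum_add_distrib]
  rw [hAk, hBk, hCk, hAsum, hCsum, hBsum]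
  ring

theorem sum_sub_level_mul_generator (N : ℝ) {s' : ι}
    (hcol : ∑ s, (A s s' + B s s' + C s s') = 0)
    (hk : ∑ s, (k s : ℝ) * (A s s' + B s s' + C s s') = τ * n s' - γ * k s') :
    ∑ s, (N - k s) * (A s s' + B s s' + C s s') = γ * k s' - τ * n s' := by
  simp only [sub_mul, sum_sub_distrib]
  rw [← mul_sum, hcol, hk]
  ring

end LevelGenerator

/-- Under the same hypotheses as the exact mean-field theorem, the expected
number of susceptible nodes [S](t) = Σ_s (N − infCount s)·X_t(s) satisfies
d[S]/dt = γ[I] − τ[SI]; consequently d([S]+[I])/dt = 0 (the total-probability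
derivative Σ_s Ẋ_s vanishes since all column sums of the generator are zero). -/
theorem stmt13 {N : ℕ} (τ γ : ℝ) (n : (Fin N → Bool) → ℝ)
    (A B C : Matrix (Fin N → Bool) (Fin N → Bool) ℝ)
    (hA : ∀ s s', A s s' ≠ 0 → infCount s = infCount s' + 1)
    (hC : ∀ s s', C s s' ≠ 0 → infCount s + 1 = infCount s')
    (hBdiag : ∀ s s', s ≠ s' → B s s' = 0)
    (hCsum : ∀ s', ∑ s, C s s' = γ * infCount s')
    (hAsum : ∀ s', ∑ s, A s s' = τ * n s')
    (hcol : ∀ s', ∑ s, (A s s' + B s s' + C s s') = 0)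
    (X : ℝ → (Fin N → Bool) → ℝ)
    (hX : ∀ s t, HasDerivAt (fun u => X u s)
      (∑ s', (A s s' + B s s' + C s s') * X t s') t)
    (t : ℝ) :
    HasDerivAt (fun u => ∑ s, ((N : ℝ) - infCount s) * X u s)
      (γ * (∑ s, (infCount s : ℝ) * X t s) - τ * ∑ s, n s * X t s) t ∧
    HasDerivAt (fun u => (∑ s, ((N : ℝ) - infCount s) * X u s)
      + ∑ s, (infCount s : ℝ) * X u s) 0 t := by
  have hM : ∀ s, HasDerivAt (fun u => X u s) (((A + B + C) *ᵥ X t) s) t := fun s => hX s t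
  have hk := sum_level_mul_generator τ γ infCount n hA hC hBdiag hCsum hAsum hcol
  have hS : HasDerivAt (fun u => ∑ s, ((N : ℝ) - infCount s) * X u s)
      (γ * (∑ s, (infCount s : ℝ) * X t s) - τ * ∑ s, n s * X t s) t :=
    (hasDerivAt_sum_mul_of_hasDerivAt_mulVec _ hM (funext fun s' =>
      sum_sub_level_mul_generator τ γ infCount n N (hcol s') (hk s'))).congr_deriv
      (by simp only [sub_mul, sum_sub_distrib, mul_sum, mul_assoc])
  have hI : HasDerivAt (fun u => ∑ s, (infCount s : ℝ) * X u s)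
      (τ * (∑ s, n s * X t s) - γ * ∑ s, (infCount s : ℝ) * X t s) t :=
    (hasDerivAt_sum_mul_of_hasDerivAt_mulVec _ hM (funext hk)).congr_deriv
      (by simp only [sub_mul, sum_sub_distrib, mul_sum, mul_assoc])
  exact ⟨hS, (hS.add hI).congr_deriv (by ring)⟩
end

section
/- For the mean-field equation İ = τ(N−I)·d·f((e−1)I/N) − γI with f(x) = min(x,c): if τ·d·(e−1) ≤ γ, then I = 0 is the only equilibrium in [0, N]; if τ·d·(e−1) > γ, there exists a unique positive equilibrium I* ∈ (0, N]. -/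
/-!
With `a = τ d` and `k = e - 1`, dividing the equilibrium equation by `I > 0` turns it into
`a (N - I) min (k / N, c / I) = γ`. The left side is the minimum of two strictly decreasing
branches, so it is strictly decreasing on `(0, N]` and stays below `a k` there: hence no positive
equilibrium when `a k ≤ γ`, and at most one otherwise. When `γ < a k` each branch reaches `γ` at an
explicit point of `(0, N]`, and their minimum reaches it at the smaller of the two.
-/

open Set

lemma StrictAntiOn.min {α β : Type*} [Preorder α] [LinearOrder β] {f g : α → β} {s : Set α}
    (hf : StrictAntiOn f s) (hg : StrictAntiOn g s) : StrictAntiOn (fun x ↦ min (f x) (g x)) s :=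
  fun _ hx _ hy hxy ↦ min_lt_min (hf hx hy hxy) (hg hx hy hxy)

lemma min_apply_min_eq_of_antitoneOn {α β : Type*} [LinearOrder α] [LinearOrder β]
    {f g : α → β} {s : Set α} {x y : α} {t : β} (hf : AntitoneOn f s) (hg : AntitoneOn g s)
    (hx : x ∈ s) (hy : y ∈ s) (hfx : f x = t) (hgy : g y = t) :
    min (f (min x y)) (g (min x y)) = t := by
  rcases le_total x y with hxy | hyx
  · rw [min_eq_left hxy, hfx, min_eq_left (hgy ▸ hg hx hy hxy)]
  · rw [min_eq_right hyx, hgy, min_eq_right (hfx ▸ hf hy hx hyx)]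

section

variable {a b k c N I γ : ℝ}

lemma strictAnti_mul_sub_div (hb : 0 < b) (hN : 0 < N) :
    StrictAnti fun I ↦ b * (N - I) / N :=
  fun _ _ hIJ ↦ by dsimp only; gcongr

lemma strictAntiOn_mul_sub_div_self (hb : 0 < b) (hN : 0 < N) :
    StrictAntiOn (fun I ↦ b * (N - I) / I) (Ioi 0) := by
  intro I hI J _ hIJ
  simp only [mem_Ioi] at hI
  rw [div_lt_div_iff₀ (hI.trans hIJ) hI]
  nlinarith [mul_pos hb (mul_pos hN (sub_pos.mpr hIJ))]

/-- The infection rate per infected individual, `a (N - I) min (k / N, c / I)`, written as the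
smaller of its unsaturated and saturated branches. -/
noncomputable def perCapitaRate (a k c N I : ℝ) : ℝ :=
  min (a * k * (N - I) / N) (a * c * (N - I) / I)

lemma mul_perCapitaRate (ha : 0 ≤ a) (hI : 0 < I) (hIN : I ≤ N) :
    I * perCapitaRate a k c N I = a * (N - I) * min (k * I / N) c := by
  have hS : 0 ≤ a * (N - I) := mul_nonneg ha (sub_nonneg.mpr hIN)
  rw [perCapitaRate, mul_min_of_nonneg _ _ hI.le, mul_min_of_nonneg _ _ hS]
  congr 1
  · ring
  · field_simp

lemma perCapitaRate_lt (ha : 0 < a) (hk : 0 < k) (hN : 0 < N) (hI : 0 < I) :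
    perCapitaRate a k c N I < a * k :=
  calc perCapitaRate a k c N I ≤ a * k * (N - I) / N := min_le_left _ _
    _ < a * k := by rw [div_lt_iff₀ hN]; nlinarith [mul_pos ha hk]

lemma strictAntiOn_perCapitaRate (ha : 0 < a) (hk : 0 < k) (hc : 0 < c) (hN : 0 < N) :
    StrictAntiOn (perCapitaRate a k c N) (Ioc 0 N) :=
  ((strictAnti_mul_sub_div (mul_pos ha hk) hN).strictAntiOn _).min
    ((strictAntiOn_mul_sub_div_self (mul_pos ha hc) hN).mono Ioc_subset_Ioi_self)

/-- The unsaturated branch takes the value `γ` at `N (1 - γ / (a k))`, the saturated one at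
`a c N / (a c + γ)`. -/
lemma exists_perCapitaRate_eq (ha : 0 < a) (hk : 0 < k) (hc : 0 < c) (hN : 0 < N)
    (hγ : 0 < γ) (hγak : γ < a * k) :
    ∃ I ∈ Ioc 0 N, perCapitaRate a k c N I = γ := by
  have hak : 0 < a * k := mul_pos ha hk
  have hac : 0 < a * c := mul_pos ha hc
  have hγak' : 0 < γ / (a * k) := div_pos hγ hak
  have hunsat : N * (1 - γ / (a * k)) ∈ Ioc 0 N := by
    refine ⟨mul_pos hN ?_, mul_le_of_le_one_right hN.le (by linarith)⟩
    rw [sub_pos, div_lt_one hak]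
    exact hγak
  have hsat : a * c * N / (a * c + γ) ∈ Ioc 0 N := by
    refine ⟨by positivity, ?_⟩
    rw [div_le_iff₀ (by positivity)]
    nlinarith
  refine ⟨_, ⟨lt_min hunsat.1 hsat.1, (min_le_left _ _).trans hunsat.2⟩,
    min_apply_min_eq_of_antitoneOn (f := fun I ↦ a * k * (N - I) / N)
      (g := fun I ↦ a * c * (N - I) / I)
      ((strictAnti_mul_sub_div hak hN).antitone.antitoneOn _)
      ((strictAntiOn_mul_sub_div_self hac hN).antitoneOn.mono Ioc_subset_Ioi_self)
      hunsat hsat ?_ ?_⟩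
  all_goals field_simp; ring

end

/-- Threshold behaviour of the regular-hypergraph mean-field equation:
if τ·d·(e−1) ≤ γ then 0 is the only equilibrium in [0,N]; if τ·d·(e−1) > γ
there is a unique positive equilibrium in (0,N]. -/
theorem stmt16 (τ γ N c : ℝ) (d e : ℕ) (hτ : 0 < τ) (hγ : 0 < γ)
    (hd : 1 ≤ d) (he : 2 ≤ e) (hN : 1 ≤ N) (hc : 0 < c) :
    (τ * d * ((e : ℝ) - 1) ≤ γ →
      ∀ I ∈ Set.Icc (0 : ℝ) N,
        τ * (N - I) * d * min (((e : ℝ) - 1) * I / N) c - γ * I = 0 → I = 0) ∧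
    (γ < τ * d * ((e : ℝ) - 1) →
      ∃! I, I ∈ Set.Ioc (0 : ℝ) N ∧
        τ * (N - I) * d * min (((e : ℝ) - 1) * I / N) c - γ * I = 0) := by
  have ha : 0 < τ * d := mul_pos hτ (by exact_mod_cast hd)
  have hk : (0 : ℝ) < (e : ℝ) - 1 := by
    have : (2 : ℝ) ≤ e := by exact_mod_cast he
    linarith
  have hN0 : 0 < N := by linarith
  have hdrift : ∀ I ∈ Ioc 0 N, τ * (N - I) * d * min (((e : ℝ) - 1) * I / N) c - γ * I
      = I * (perCapitaRate (τ * d) ((e : ℝ) - 1) c N I - γ) := fun I hI ↦ by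
    rw [mul_sub I, mul_perCapitaRate ha.le hI.1 hI.2]
    ring
  refine ⟨fun hsub I hI hI0 ↦ ?_, fun hsup ↦ ?_⟩
  · by_contra hne
    have hpos : 0 < I := hI.1.lt_of_ne' hne
    rw [hdrift I ⟨hpos, hI.2⟩] at hI0
    have hneg : perCapitaRate (τ * d) ((e : ℝ) - 1) c N I - γ < 0 := by
      linarith [perCapitaRate_lt ha hk hN0 hpos (c := c)]
    exact (mul_neg_of_pos_of_neg hpos hneg).ne hI0
  · obtain ⟨I, hI, hIγ⟩ := exists_perCapitaRate_eq ha hk hc hN0 hγ hsup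
    refine ⟨I, ⟨hI, by rw [hdrift I hI, hIγ, sub_self, mul_zero]⟩, fun J ⟨hJ, hJ0⟩ ↦ ?_⟩
    rw [hdrift J hJ, mul_eq_zero, sub_eq_zero] at hJ0
    exact (strictAntiOn_perCapitaRate ha hk hc hN0).injOn hJ hI
      (hIγ ▸ hJ0.resolve_left hJ.1.ne')
end
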